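/- Let (X, I) be a p-extendible independence system (p a positive integer) and f : 2^X → ℝ≥0 a monotone submodular function, and suppose the instance is (p+1)-stable with unique optimal solution S* = argmax_{S ∈ I} f(S). Then every greedy run outputs S*; that is, if e₁, …, e_k is a sequence with Sᵢ = {e₁,…,eᵢ} ∈ I for all i, each eᵢ maximizes the marginal value f(S_{i−1} ∪ {e}) − f(S_{i−1}) among elements e ∉ S_{i−1} with S_{i−1} ∪ {e} ∈ I, and S_k is a maximal independent set, then S_k = S*. -/

import Mathlib

open Finset

/-- A downward-closed independence system on the finite type `α`. -/
def DownClosed {α : Type*} (I : Finset α → Prop) : Prop :=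
  I ∅ ∧ ∀ A B : Finset α, I A → B ⊆ A → I B
/-- `(X, I)` is `p`-extendible: whenever `A ⊆ B`, `A, B ∈ I` and `A ∪ {e} ∈ I`,
there is `Z ⊆ B \ A` with `|Z| ≤ p` and `(B \ Z) ∪ {e} ∈ I`. -/
def Extendible {α : Type*} [DecidableEq α] (p : ℕ) (I : Finset α → Prop) : Prop :=
  ∀ A B : Finset α, ∀ e : α, A ⊆ B → I A → I B → I (insert e A) →
    ∃ Z ⊆ B \ A, Z.card ≤ p ∧ I (insert e (B \ Z))
/-- Monotonicity of a set function. -/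
def MonotoneFn {α : Type*} (f : Finset α → ℝ) : Prop :=
  ∀ A B : Finset α, A ⊆ B → f A ≤ f B

/-- Submodularity of a set function. -/
def SubmodularFn {α : Type*} [DecidableEq α] (f : Finset α → ℝ) : Prop :=
  ∀ A B : Finset α, f (A ∪ B) + f (A ∩ B) ≤ f A + f B

/-- `f'` is a `γ`-perturbation of the monotone submodular function `f`. -/
def IsPerturbation {α : Type*} [DecidableEq α] (γ : ℝ) (f f' : Finset α → ℝ) : Prop :=
  (∀ S : Finset α, 0 ≤ f' S) ∧ MonotoneFn f' ∧ SubmodularFn f' ∧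
  (∀ S : Finset α, f S ≤ f' S ∧ f' S ≤ γ * f S) ∧
  ∀ S : Finset α, ∀ j ∉ S,
    f (insert j S) - f S ≤ f' (insert j S) - f' S ∧
    (f' (insert j S) - f' S) - (f (insert j S) - f S) ≤ (γ - 1) * f {j}
/-- The submodular instance `(I, f)` is `γ`-stable with (unique) optimal solution `S`:
for every `γ`-perturbation `f'` of `f`, `S` is the unique maximizer of `f'` over `I`. -/
def SubmodStable {α : Type*} [DecidableEq α] (I : Finset α → Prop)
    (f : Finset α → ℝ) (γ : ℝ) (S : Finset α) : Prop :=
  I S ∧ ∀ f' : Finset α → ℝ, IsPerturbation γ f f' →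
    ∀ T : Finset α, I T → T ≠ S → f' T < f' S
/-- A greedy run for a set function `f`: every prefix is independent, each `eᵢ`
maximizes the marginal value among feasible additions, and the final set is maximal. -/
def GreedyRunSub {α : Type*} [DecidableEq α] (I : Finset α → Prop)
    (f : Finset α → ℝ) (l : List α) : Prop :=
  (∀ i : Fin l.length,
    l.get i ∉ (l.take i.val).toFinset ∧
    I (insert (l.get i) (l.take i.val).toFinset) ∧
    ∀ e : α, e ∉ (l.take i.val).toFinset → I (insert e (l.take i.val).toFinset) →
      f (insert e (l.take i.val).toFinset) - f (l.take i.val).toFinset ≤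
        f (insert (l.get i) (l.take i.val).toFinset) - f (l.take i.val).toFinset) ∧
  ∀ e : α, e ∉ l.toFinset → ¬ I (insert e l.toFinset)


/-!
Let `G = {e₁, …, e_k}` be the greedy output with prefixes `Gᵢ` and gains
`δᵢ = f(Gᵢ) - f(Gᵢ₋₁)`. The modular function `g(S) = ∑_{eᵢ ∈ S} δᵢ` is nonnegative and bounded
by `f` (submodularity), so `f + p • g` is a `(p + 1)`-perturbation of `f`. An exchange argument
along the greedy steps, using `p`-extendibility, turns `S*` into `G` while losing at most `p • δᵢ`
at every step `i` with `eᵢ ∉ S*`; this gives `f(S*) + p • g(S*) ≤ f(G) + p • g(G)`, so `G`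
maximizes the perturbation over `I`, and stability forces `G = S*`.
-/

section SetFunction

variable {α : Type*} [DecidableEq α] {f : Finset α → ℝ}

theorem SubmodularFn.marginal_le_of_subset (hsub : SubmodularFn f) {A B : Finset α}
    (hAB : A ⊆ B) {z : α} (hz : z ∉ B) :
    f (insert z B) - f B ≤ f (insert z A) - f A := by
  have h := hsub (insert z A) B
  rw [insert_union, union_eq_right.2 hAB, insert_inter_of_notMem hz, inter_eq_left.2 hAB] at h
  linarith

theorem SubmodularFn.le_add_sum_marginal (hsub : SubmodularFn f) (A B : Finset α) :
    f (A ∪ B) ≤ f A + ∑ z ∈ B, (f (insert z A) - f A) := by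
  induction B using Finset.induction with
  | empty => simp
  | @insert z B hz ih =>
    have h := hsub (A ∪ B) (insert z A)
    have hunion : A ∪ B ∪ insert z A = A ∪ insert z B := by
      ext y; simp only [mem_union, mem_insert]; tauto
    have hinter : (A ∪ B) ∩ insert z A = A := by
      ext y
      by_cases hy : y = z
      · subst hy; simp [hz]
      · simp +contextual [hy]
    rw [hunion, hinter] at h
    rw [sum_insert hz]
    linarith

theorem isPerturbation_add_mul_sum {w : α → ℝ} {c : ℝ} (hc : 0 ≤ c) (hmono : MonotoneFn f)
    (hsub : SubmodularFn f) (hw : ∀ x, 0 ≤ w x) (hwf : ∀ S, ∑ x ∈ S, w x ≤ f S) :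
    IsPerturbation (c + 1) f (fun S => f S + c * ∑ x ∈ S, w x) := by
  have hsum : ∀ S : Finset α, 0 ≤ ∑ x ∈ S, w x := fun S => sum_nonneg fun x _ => hw x
  have hwj : ∀ j, w j ≤ f {j} := fun j => by simpa using hwf {j}
  refine ⟨fun S => ?_, fun A B hAB => ?_, fun A B => ?_, fun S => ⟨?_, ?_⟩, fun S j hj => ?_⟩
  · linarith [hwf S, hsum S, mul_nonneg hc (hsum S)]
  · have := mul_le_mul_of_nonneg_left (sum_le_sum_of_subset_of_nonneg hAB fun x _ _ => hw x) hc
    linarith [hmono A B hAB]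
  · have := sum_union_inter (s₁ := A) (s₂ := B) (f := w)
    linear_combination hsub A B + c * this
  · linarith [mul_nonneg hc (hsum S)]
  · linarith [mul_le_mul_of_nonneg_left (hwf S) hc]
  · simp only [sum_insert hj]
    constructor
    · linarith [mul_nonneg hc (hw j)]
    · linarith [mul_le_mul_of_nonneg_left (hwj j) hc]

end SetFunction

theorem List.monotone_toFinset_take {α : Type*} [DecidableEq α] (l : List α) :
    Monotone fun i => (l.take i).toFinset :=
  fun _ _ h _ hx => List.mem_toFinset.2 (List.take_subset_take_left l h (List.mem_toFinset.1 hx))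

theorem List.toFinset_take_add_one {α : Type*} [DecidableEq α] {l : List α} {i : ℕ}
    (h : i < l.length) : (l.take (i + 1)).toFinset = insert l[i] (l.take i).toFinset := by
  rw [List.take_add_one, List.getElem?_eq_getElem h, List.toFinset_append, union_comm]
  rfl

theorem List.Nodup.getElem_notMem_take {α : Type*} {l : List α} (hnd : l.Nodup) {i : ℕ}
    (h : i < l.length) : l[i] ∉ l.take i := by
  rw [List.mem_take_iff_getElem]
  rintro ⟨j, hj, hji⟩
  have := hnd.getElem_inj_iff.1 hji
  omega

section Greedy

variable {α : Type*} [DecidableEq α]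

def prefixGain (f : Finset α → ℝ) (l : List α) (i : ℕ) : ℝ :=
  f (l.take (i + 1)).toFinset - f (l.take i).toFinset

/-- The gain `δᵢ` credited to `eᵢ = l[i]`. For `x ∉ l` we have `l.idxOf x = l.length`, where the
prefix gain vanishes. -/
def greedyWeight (f : Finset α → ℝ) (l : List α) (x : α) : ℝ :=
  prefixGain f l (l.idxOf x)

variable {f : Finset α → ℝ} {l : List α}

theorem prefixGain_nonneg (hmono : MonotoneFn f) (i : ℕ) : 0 ≤ prefixGain f l i :=
  sub_nonneg.2 (hmono _ _ (l.monotone_toFinset_take (Nat.le_succ i)))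

theorem greedyWeight_nonneg (hmono : MonotoneFn f) (x : α) : 0 ≤ greedyWeight f l x :=
  prefixGain_nonneg hmono _

theorem greedyWeight_of_notMem {x : α} (hx : x ∉ l) : greedyWeight f l x = 0 := by
  rw [greedyWeight, prefixGain, List.idxOf_of_notMem hx, List.take_of_length_le (by omega),
    List.take_length, sub_self]

theorem greedyWeight_getElem (hnd : l.Nodup) {i : ℕ} (h : i < l.length) :
    greedyWeight f l l[i] = prefixGain f l i := by
  rw [greedyWeight, hnd.idxOf_getElem]

theorem sum_greedyWeight_inter_toFinset (S : Finset α) :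
    ∑ x ∈ S ∩ l.toFinset, greedyWeight f l x = ∑ x ∈ S, greedyWeight f l x :=
  sum_subset inter_subset_left fun _ hxS hx =>
    greedyWeight_of_notMem fun h => hx (mem_inter.2 ⟨hxS, List.mem_toFinset.2 h⟩)

theorem sum_greedyWeight_inter_take_le (hsub : SubmodularFn f) (hnd : l.Nodup) (S : Finset α)
    {m : ℕ} (hm : m ≤ l.length) :
    ∑ x ∈ S ∩ (l.take m).toFinset, greedyWeight f l x ≤ f (S ∩ (l.take m).toFinset) - f ∅ := by
  induction m with
  | zero => simp
  | succ m ih =>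
    have hm' : m < l.length := hm
    have hfresh : l[m] ∉ (l.take m).toFinset := fun h =>
      hnd.getElem_notMem_take hm' (List.mem_toFinset.1 h)
    specialize ih hm'.le
    rw [List.toFinset_take_add_one hm']
    by_cases heS : l[m] ∈ S
    · have hnotin : l[m] ∉ S ∩ (l.take m).toFinset := fun h => hfresh (mem_inter.1 h).2
      rw [inter_insert_of_mem heS, sum_insert hnotin, greedyWeight_getElem hnd hm']
      have := hsub.marginal_le_of_subset
        (inter_subset_right : S ∩ (l.take m).toFinset ⊆ _) hfresh
      rw [prefixGain, List.toFinset_take_add_one hm']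
      linarith
    · rw [inter_insert_of_notMem heS]
      exact ih

theorem sum_greedyWeight_le (hf0 : 0 ≤ f ∅) (hmono : MonotoneFn f) (hsub : SubmodularFn f)
    (hnd : l.Nodup) (S : Finset α) : ∑ x ∈ S, greedyWeight f l x ≤ f S := by
  have := sum_greedyWeight_inter_take_le hsub hnd S le_rfl
  rw [List.take_length, sum_greedyWeight_inter_toFinset] at this
  linarith [hmono _ _ (inter_subset_left : S ∩ l.toFinset ⊆ S)]

variable {I : Finset α → Prop}

theorem GreedyRunSub.nodup (hl : GreedyRunSub I f l) : l.Nodup :=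
  List.pairwise_iff_getElem.2 fun i j hi hj hij heq =>
    (hl.1 ⟨j, hj⟩).1 (List.mem_toFinset.2 (List.mem_take_iff_getElem.2 ⟨i, lt_min hij hi, heq⟩))

theorem GreedyRunSub.indep (hI : I ∅) (hl : GreedyRunSub I f l) : I l.toFinset := by
  rcases l.eq_nil_or_concat with rfl | ⟨l', e, rfl⟩
  · simpa using hI
  · simpa using (hl.1 ⟨l'.length, by simp⟩).2.1

theorem GreedyRunSub.marginal_le_prefixGain (hl : GreedyRunSub I f l) {m : ℕ}
    (hm : m < l.length) {e : α} (he : e ∉ (l.take m).toFinset)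
    (hI : I (insert e (l.take m).toFinset)) :
    f (insert e (l.take m).toFinset) - f (l.take m).toFinset ≤ prefixGain f l m := by
  rw [prefixGain, List.toFinset_take_add_one hm]
  exact (hl.1 ⟨m, hm⟩).2.2 e he hI

theorem GreedyRunSub.eq_of_toFinset_subset (hdc : DownClosed I) (hl : GreedyRunSub I f l)
    {T : Finset α} (hT : I T) (hlT : l.toFinset ⊆ T) : T = l.toFinset := by
  refine subset_antisymm (fun z hzT => ?_) hlT
  by_contra hz
  exact hl.2 z hz (hdc.2 T _ hT (insert_subset hzT hlT))

theorem GreedyRunSub.exists_exchange_step {p : ℕ} (hdc : DownClosed I) (hext : Extendible p I)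
    (hmono : MonotoneFn f) (hsub : SubmodularFn f) (hl : GreedyRunSub I f l) {m : ℕ}
    (hm : m < l.length) {S T : Finset α} (hT : I T)
    (hlo : (l.take m).toFinset ∪ S ∩ l.toFinset ⊆ T) (hhi : T ⊆ (l.take m).toFinset ∪ S) :
    ∃ T', I T' ∧ (l.take (m + 1)).toFinset ∪ S ∩ l.toFinset ⊆ T' ∧
      T' ⊆ (l.take (m + 1)).toFinset ∪ S ∧
      f (T ∪ l.toFinset) ≤ f (T' ∪ l.toFinset) + p * prefixGain f l m := by
  set P := (l.take m).toFinset
  set G := l.toFinset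
  have heG : l[m] ∈ G := List.mem_toFinset.2 (List.getElem_mem hm)
  have hPG : P ⊆ G := by simpa using l.monotone_toFinset_take hm.le
  have hIA : I (P ∪ S ∩ G) := hdc.2 T _ hT hlo
  have hIeA : I (insert l[m] (P ∪ S ∩ G)) :=
    hdc.2 G _ (hl.indep hdc.1) (insert_subset heG (union_subset hPG inter_subset_right))
  obtain ⟨Z, hZ, hZcard, hIZ⟩ := hext _ T l[m] hlo hIA hT hIeA
  refine ⟨insert l[m] (T \ Z), hIZ, ?_, ?_, ?_⟩
  · rw [List.toFinset_take_add_one hm, insert_union]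
    exact insert_subset_insert _
      (subset_sdiff.2 ⟨hlo, (disjoint_of_subset_left hZ sdiff_disjoint).symm⟩)
  · rw [List.toFinset_take_add_one hm, insert_union]
    exact insert_subset_insert _ (sdiff_subset.trans hhi)
  set T' := insert l[m] (T \ Z) ∪ G
  -- Every `z ∈ Z` lies in `S \ G` and could have been added to `P` instead of `l[m]`.
  have hmarg : ∀ z ∈ Z, f (insert z T') - f T' ≤ prefixGain f l m := by
    intro z hz
    obtain ⟨hzT, hzA⟩ := mem_sdiff.1 (hZ hz)
    have hzP : z ∉ P := fun h => hzA (mem_union_left _ h)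
    have hzS : z ∈ S := (mem_union.1 (hhi hzT)).resolve_left hzP
    have hzG : z ∉ G := fun h => hzA (mem_union_right _ (mem_inter.2 ⟨hzS, h⟩))
    have hzT' : z ∉ T' := by
      simp only [T', mem_union, mem_insert, mem_sdiff, not_or, not_and, not_not]
      exact ⟨⟨fun h => hzG (h ▸ heG), fun _ => hz⟩, hzG⟩
    calc f (insert z T') - f T' ≤ f (insert z P) - f P :=
          hsub.marginal_le_of_subset (hPG.trans subset_union_right) hzT'
      _ ≤ prefixGain f l m := hl.marginal_le_prefixGain hm hzP
          (hdc.2 T _ hT (insert_subset hzT (subset_union_left.trans hlo)))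
  calc f (T ∪ G) ≤ f (T' ∪ Z) := hmono _ _ fun y => by
        simp only [T', mem_union, mem_insert, mem_sdiff]; tauto
    _ ≤ f T' + ∑ z ∈ Z, (f (insert z T') - f T') := hsub.le_add_sum_marginal T' Z
    _ ≤ f T' + Z.card • prefixGain f l m := by grw [sum_le_card_nsmul _ _ _ hmarg]
    _ ≤ f T' + p * prefixGain f l m := by
        rw [nsmul_eq_mul]
        gcongr
        exact prefixGain_nonneg hmono m

theorem GreedyRunSub.exists_exchange {p : ℕ} (hdc : DownClosed I) (hext : Extendible p I)
    (hmono : MonotoneFn f) (hsub : SubmodularFn f) (hl : GreedyRunSub I f l) {S : Finset α}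
    (hS : I S) {m : ℕ} (hm : m ≤ l.length) :
    ∃ T, I T ∧ (l.take m).toFinset ∪ S ∩ l.toFinset ⊆ T ∧ T ⊆ (l.take m).toFinset ∪ S ∧
      f (S ∪ l.toFinset) ≤
        f (T ∪ l.toFinset) + p * ∑ x ∈ (l.take m).toFinset \ S, greedyWeight f l x := by
  induction m with
  | zero => exact ⟨S, hS, by simp, by simp, by simp⟩
  | succ m ih =>
    have hm' : m < l.length := hm
    obtain ⟨T, hT, hlo, hhi, hval⟩ := ih hm'.le
    rw [List.toFinset_take_add_one hm']
    by_cases heS : l[m] ∈ S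
    · have heT : l[m] ∈ T :=
        hlo (mem_union_right _ (mem_inter.2 ⟨heS, List.mem_toFinset.2 (List.getElem_mem hm')⟩))
      refine ⟨T, hT, by rw [insert_union]; exact insert_subset heT hlo,
        hhi.trans (union_subset_union_left (subset_insert _ _)), ?_⟩
      rwa [insert_sdiff_of_mem _ heS]
    · obtain ⟨T', hT', hlo', hhi', hval'⟩ :=
        hl.exists_exchange_step hdc hext hmono hsub hm' hT hlo hhi
      rw [List.toFinset_take_add_one hm'] at hlo' hhi'
      have hfresh : l[m] ∉ (l.take m).toFinset \ S := fun h =>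
        hl.nodup.getElem_notMem_take hm' (List.mem_toFinset.1 (mem_sdiff.1 h).1)
      refine ⟨T', hT', hlo', hhi', ?_⟩
      rw [insert_sdiff_of_notMem _ heS, sum_insert hfresh, greedyWeight_getElem hl.nodup hm']
      linarith

theorem GreedyRunSub.add_mul_sum_greedyWeight_le {p : ℕ} (hdc : DownClosed I)
    (hext : Extendible p I) (hmono : MonotoneFn f) (hsub : SubmodularFn f)
    (hl : GreedyRunSub I f l) {S : Finset α} (hS : I S) :
    f S + p * ∑ x ∈ S, greedyWeight f l x ≤
      f l.toFinset + p * ∑ x ∈ l.toFinset, greedyWeight f l x := by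
  obtain ⟨T, hT, hlo, hhi, hval⟩ := hl.exists_exchange hdc hext hmono hsub hS le_rfl
  rw [List.take_length] at hlo hhi hval
  rw [hl.eq_of_toFinset_subset hdc hT (subset_union_left.trans hlo), union_self] at hval
  rw [← sum_inter_add_sum_sdiff l.toFinset S, inter_comm, sum_greedyWeight_inter_toFinset]
  linarith [hmono S _ (subset_union_left : S ⊆ S ∪ l.toFinset)]

end Greedy

theorem greedy_recovers_submodular_pExtendible_general
    {α : Type*} [DecidableEq α] (p : ℕ)
    (I : Finset α → Prop) (hdc : DownClosed I) (hext : Extendible p I)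
    (f : Finset α → ℝ) (hf0 : ∀ S : Finset α, 0 ≤ f S)
    (hmono : MonotoneFn f) (hsub : SubmodularFn f)
    (Sstar : Finset α) (hstable : SubmodStable I f ((p : ℝ) + 1) Sstar)
    (l : List α) (hl : GreedyRunSub I f l) :
    l.toFinset = Sstar := by
  by_contra hne
  have hpert := isPerturbation_add_mul_sum (Nat.cast_nonneg p) hmono hsub
    (greedyWeight_nonneg hmono) (sum_greedyWeight_le (hf0 ∅) hmono hsub hl.nodup)
  exact (hstable.2 _ hpert _ (hl.indep hdc.1) hne).not_ge
    (hl.add_mul_sum_greedyWeight_le hdc hext hmono hsub hstable.1)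

/-- On a `(p+1)`-stable instance of monotone submodular maximization over a
`p`-extendible independence system, every greedy run outputs the optimal solution `S*`. -/
theorem greedy_recovers_submodular_pExtendible
    {α : Type*} [Fintype α] [DecidableEq α] (p : ℕ) (hp : 0 < p)
    (I : Finset α → Prop) (hdc : DownClosed I) (hext : Extendible p I)
    (f : Finset α → ℝ) (hf0 : ∀ S : Finset α, 0 ≤ f S)
    (hmono : MonotoneFn f) (hsub : SubmodularFn f)
    (Sstar : Finset α) (hstable : SubmodStable I f ((p : ℝ) + 1) Sstar)
    (l : List α) (hl : GreedyRunSub I f l) :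
    l.toFinset = Sstar :=
  greedy_recovers_submodular_pExtendible_general p I hdc hext f hf0 hmono hsub Sstar hstable l hl
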